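/- arXiv:0810.2849 — 5 statements merged into one kernel-verified Lean document; each statement's English description precedes it below -/
import Mathlib

section
/- Let A be a left Leibniz algebra and let b be a nonzero product of n ≥ 1 copies of an element a ∈ A (with some bracketing). Then b = a(a(⋯(aa)⋯)), i.e., b is a right-normed power of a. -/
/-- `IsProd mul a n b` : `b` is a product of `n` copies of `a` with some bracketing. -/
inductive IsProd {F A : Type*} [Field F] [AddCommGroup A] [Module F A]
    (mul : A →ₗ[F] A →ₗ[F] A) (a : A) : ℕ → A → Prop
  | base : IsProd mul a 1 a
  | mul {m n : ℕ} {u v : A} : IsProd mul a m u → IsProd mul a n v →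
      IsProd mul a (m + n) (mul u v)

/-- `rnPow mul a k` is the right-normed product of `k+1` copies of `a`:
`a(a(⋯(aa)⋯))`. -/
def rnPow {F A : Type*} [Field F] [AddCommGroup A] [Module F A]
    (mul : A →ₗ[F] A →ₗ[F] A) (a : A) : ℕ → A
  | 0 => a
  | k + 1 => mul a (rnPow mul a k)

/-!
Writing `L x` for left multiplication by `x`, the left Leibniz identity says
`L (u v) = L u ∘ L v - L v ∘ L u`. Hence `L (a a) = 0`, and `L (u v) = 0` as soon as `L u = 0` or
`L v = 0`. By induction every product of copies of `a` other than `a` itself has `L = 0`, so a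
nonzero product `u v` must have `u = a`, and then `v` is a right-normed power by induction.
-/

theorem leftMul_mul_eq_comp_sub_comp {R M : Type*} [CommRing R] [AddCommGroup M] [Module R M]
    {mul : M →ₗ[R] M →ₗ[R] M}
    (leibniz : ∀ a b c : M, mul a (mul b c) = mul (mul a b) c + mul b (mul a c)) (u v : M) :
    mul (mul u v) = mul u ∘ₗ mul v - mul v ∘ₗ mul u := by
  ext x
  rw [LinearMap.sub_apply, LinearMap.comp_apply, LinearMap.comp_apply, leibniz]
  abel

namespace IsProd

variable {F A : Type*} [Field F] [AddCommGroup A] [Module F A] {mul : A →ₗ[F] A →ₗ[F] A}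
  {a b : A} {n : ℕ}

theorem pos (h : IsProd mul a n b) : 0 < n := by
  induction h <;> omega

theorem eq_self_or_leftMul_eq_zero
    (leibniz : ∀ a b c : A, mul a (mul b c) = mul (mul a b) c + mul b (mul a c))
    (h : IsProd mul a n b) : n = 1 ∧ b = a ∨ mul b = 0 := by
  induction h with
  | base => exact .inl ⟨rfl, rfl⟩
  | mul _ _ ihu ihv =>
    right
    rw [leftMul_mul_eq_comp_sub_comp leibniz]
    rcases ihu with ⟨-, rfl⟩ | hu
    · rcases ihv with ⟨-, rfl⟩ | hv
      · exact sub_self _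
      · rw [hv, LinearMap.comp_zero, LinearMap.zero_comp, sub_zero]
    · rw [hu, LinearMap.comp_zero, LinearMap.zero_comp, sub_zero]

theorem eq_rnPow_or_eq_zero
    (leibniz : ∀ a b c : A, mul a (mul b c) = mul (mul a b) c + mul b (mul a c))
    (h : IsProd mul a n b) : b = rnPow mul a (n - 1) ∨ b = 0 := by
  induction h with
  | base => exact .inl rfl
  | @mul _ k u v hu hv _ ihv =>
    rcases hu.eq_self_or_leftMul_eq_zero leibniz with ⟨rfl, rfl⟩ | hu0
    · rcases ihv with rfl | rfl
      · left
        rw [show 1 + k - 1 = k - 1 + 1 by have := hv.pos; omega]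
        rfl
      · exact .inr (map_zero _)
    · exact .inr (LinearMap.congr_fun hu0 v)

end IsProd

theorem prod_eq_rnPow_general {F A : Type*} [Field F] [AddCommGroup A] [Module F A]
    (mul : A →ₗ[F] A →ₗ[F] A)
    (leibniz : ∀ a b c : A, mul a (mul b c) = mul (mul a b) c + mul b (mul a c))
    {a b : A} {n : ℕ} (hb : IsProd mul a n b) (hb0 : b ≠ 0) :
    b = rnPow mul a (n - 1) :=
  (hb.eq_rnPow_or_eq_zero leibniz).resolve_right hb0

/-- a nonzero product of `n ≥ 1` copies of `a` is the right-normed power. -/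
theorem prod_eq_rnPow {F A : Type*} [Field F] [AddCommGroup A] [Module F A]
    (mul : A →ₗ[F] A →ₗ[F] A)
    (leibniz : ∀ a b c : A, mul a (mul b c) = mul (mul a b) c + mul b (mul a c))
    {a b : A} {n : ℕ} (hn : 1 ≤ n) (hb : IsProd mul a n b) (hb0 : b ≠ 0) :
    b = rnPow mul a (n - 1) :=
  prod_eq_rnPow_general mul leibniz hb hb0
end

section
/- There exists a 4-dimensional left Leibniz algebra A with a one-dimensional subalgebra U such that the right normaliser R_A(U) = {a ∈ A | ua ∈ U for all u ∈ U} is not a subalgebra of A. -/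
noncomputable def myMul : (Fin 4 → ℚ) →ₗ[ℚ] (Fin 4 → ℚ) →ₗ[ℚ] (Fin 4 → ℚ) :=
  LinearMap.mk₂ ℚ
    (fun a b => ![a 0 * b 1 - a 1 * b 0, 0, a 1 * b 0 + a 0 * b 3 - a 1 * b 2, a 1 * b 1])
    (by intro a a' b; funext i; fin_cases i <;> simp <;> ring)
    (by intro c a b; funext i; fin_cases i <;> simp <;> ring)
    (by intro a b b'; funext i; fin_cases i <;> simp <;> ring)
    (by intro c a b; funext i; fin_cases i <;> simp <;> ring)

lemma myMul_apply (a b : Fin 4 → ℚ) :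
    myMul a b = ![a 0 * b 1 - a 1 * b 0, 0, a 1 * b 0 + a 0 * b 3 - a 1 * b 2, a 1 * b 1] :=
  rfl

/-- there is a 4-dimensional left Leibniz algebra with a 1-dimensional
subalgebra `U` whose right normaliser is not closed under multiplication. -/
theorem exists_rightNormaliser_not_subalgebra :
    ∃ mul : (Fin 4 → ℚ) →ₗ[ℚ] (Fin 4 → ℚ) →ₗ[ℚ] (Fin 4 → ℚ),
      (∀ a b c, mul a (mul b c) = mul (mul a b) c + mul b (mul a c)) ∧
      ∃ U : Submodule ℚ (Fin 4 → ℚ),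
        (∀ u ∈ U, ∀ v ∈ U, mul u v ∈ U) ∧
        Module.finrank ℚ U = 1 ∧
        ∃ a b : Fin 4 → ℚ,
          (∀ u ∈ U, mul u a ∈ U) ∧ (∀ u ∈ U, mul u b ∈ U) ∧
          ∃ u ∈ U, mul u (mul a b) ∉ U := by
  refine ⟨myMul, ?_, Submodule.span ℚ {![1,0,0,0]}, ?_, ?_, ![0,1,0,0], ![0,1,0,0], ?_, ?_, ?_⟩
  · intro a b c
    simp only [myMul_apply]
    funext i; fin_cases i <;> simp <;> ring
  · intro u hu v hv
    rw [Submodule.mem_span_singleton] at hu hv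
    obtain ⟨s, rfl⟩ := hu; obtain ⟨t, rfl⟩ := hv
    rw [Submodule.mem_span_singleton]
    exact ⟨0, by simp [myMul_apply]; funext i; fin_cases i <;> simp⟩
  · rw [finrank_span_singleton]
    intro h
    have := congrFun h 0
    simp at this
  · intro u hu
    rw [Submodule.mem_span_singleton] at hu
    obtain ⟨s, rfl⟩ := hu
    rw [Submodule.mem_span_singleton]
    exact ⟨s, by funext i; fin_cases i <;> simp [myMul_apply]⟩
  · intro u hu
    rw [Submodule.mem_span_singleton] at hu
    obtain ⟨s, rfl⟩ := hu
    rw [Submodule.mem_span_singleton]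
    exact ⟨s, by funext i; fin_cases i <;> simp [myMul_apply]⟩
  · refine ⟨![1,0,0,0], Submodule.mem_span_singleton_self _, ?_⟩
    rw [Submodule.mem_span_singleton]
    rintro ⟨t, ht⟩
    have h2 := congrFun ht 2
    simp [myMul_apply] at h2
end

section
/- Let A be a left Leibniz algebra and a ∈ A. Then the Engel subalgebra E_A(a) = {x ∈ A | L_a^n(x) = 0 for some n ≥ 0} is a subalgebra of A. -/
/-- the Engel set `E_A(a) = {x | L_aⁿ x = 0 for some n}` is a subalgebra. -/
theorem engel_isSubalgebra {F A : Type*} [Field F] [AddCommGroup A] [Module F A]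
    [FiniteDimensional F A]
    (mul : A →ₗ[F] A →ₗ[F] A)
    (leibniz : ∀ a b c : A, mul a (mul b c) = mul (mul a b) c + mul b (mul a c))
    (a : A) :
    ∃ E : Submodule F A,
      (E : Set A) = {x : A | ∃ n : ℕ, (mul a ^ n) x = 0} ∧
      ∀ x ∈ E, ∀ y ∈ E, mul x y ∈ E := by
  set D : A →ₗ[F] A := mul a with hD
  have mono : Monotone (fun n => LinearMap.ker (D ^ n)) := by
    apply monotone_nat_of_le_succ
    intro n x hx
    simp only [LinearMap.mem_ker] at hx ⊢
    rw [pow_succ', Module.End.mul_apply, hx, map_zero]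
  have key : ∀ k m n (x y : A), m + n ≤ k → (D ^ m) x = 0 → (D ^ n) y = 0 →
      (D ^ k) (mul x y) = 0 := by
    intro k
    induction k with
    | zero =>
      intro m n x y h hx hy
      have hm : m = 0 := by omega
      subst hm
      simp only [pow_zero, Module.End.one_apply] at hx ⊢
      rw [hx]
      simp
    | succ k ih =>
      intro m n x y h hx hy
      rcases m with _ | m
      · simp only [pow_zero, Module.End.one_apply] at hx
        rw [hx]
        simp
      rcases n with _ | n
      · simp only [pow_zero, Module.End.one_apply] at hy
        rw [hy]
        simp
      have hx' : (D ^ m) (D x) = 0 := by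
        rw [← Module.End.mul_apply, ← pow_succ]; exact hx
      have hy' : (D ^ n) (D y) = 0 := by
        rw [← Module.End.mul_apply, ← pow_succ]; exact hy
      have hstep : (D ^ (k + 1)) (mul x y) = (D ^ k) (D (mul x y)) := by
        rw [pow_succ, Module.End.mul_apply]
      rw [hstep]
      have hder : D (mul x y) = mul (D x) y + mul x (D y) := leibniz a x y
      rw [hder, map_add]
      rw [ih m (n + 1) (D x) y (by omega) hx' hy,
        ih (m + 1) n x (D y) (by omega) hx hy']
      simp
  refine ⟨⨆ n : ℕ, LinearMap.ker (D ^ n), ?_, ?_⟩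
  · ext x
    simp only [SetLike.mem_coe, Set.mem_setOf_eq,
      Submodule.mem_iSup_of_directed _ mono.directed_le, LinearMap.mem_ker]
  · intro x hx y hy
    rw [Submodule.mem_iSup_of_directed _ mono.directed_le] at hx hy ⊢
    obtain ⟨m, hm⟩ := hx
    obtain ⟨n, hn⟩ := hy
    exact ⟨m + n, key (m + n) m n x y le_rfl hm hn⟩
end

section
/- Let A be a finite-dimensional left Leibniz algebra and a ∈ A. Then there exists a' ∈ E_A(a) with L_{a'} = L_a, and in particular E_A(a') = E_A(a). -/
/-!
The Leibniz identity says `L_{ab} = [L_a, L_b]`, so `L_{aa} = 0` and, inductively, `L_b = 0` for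
every `b = L_a^{n+1} a`. Apply the Fitting decomposition of `L_a` to the `L_a`-invariant span `B`
of the `L_a^n a`: for large `k`, `a = u + v` with `L_a^k u = 0` and `v ∈ L_a^k B`. Then `L_v = 0`,
so `a' = u` works.
-/

open Filter Submodule

namespace Module.End

theorem map_pow_span_range_pow_apply {R M : Type*} [Semiring R] [AddCommMonoid M] [Module R M]
    (f : Module.End R M) (x : M) (k : ℕ) :
    (span R (Set.range fun n => (f ^ n) x)).map (f ^ k) =
      span R (Set.range fun n => (f ^ (n + k)) x) := by
  rw [map_span, ← Set.range_comp]
  congr with n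
  simp [← mul_apply, ← pow_add, add_comm]

theorem apply_mem_span_range_pow_apply {R M : Type*} [Semiring R] [AddCommMonoid M]
    [Module R M] (f : Module.End R M) (x : M) :
    ∀ y ∈ span R (Set.range fun n => (f ^ n) x), f y ∈ span R (Set.range fun n => (f ^ n) x) := by
  intro y hy
  have hfy : f y ∈ (span R (Set.range fun n => (f ^ n) x)).map (f ^ 1) := by
    rw [pow_one]
    exact mem_map_of_mem hy
  rw [map_pow_span_range_pow_apply] at hfy
  refine span_mono ?_ hfy
  exact Set.range_subset_iff.2 fun n => ⟨n + 1, rfl⟩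

theorem eventually_exists_mem_ker_pow_add_mem_map_pow {R M : Type*} [Ring R] [AddCommGroup M]
    [Module R M] [IsArtinian R M] (f : Module.End R M) {p : Submodule R M}
    (hp : ∀ x ∈ p, f x ∈ p) :
    ∀ᶠ k in atTop, ∀ x ∈ p, ∃ u ∈ p, (f ^ k) u = 0 ∧ ∃ v ∈ p.map (f ^ k), u + v = x := by
  filter_upwards [(f.restrict hp).eventually_codisjoint_ker_pow_range_pow] with k hk x hx
  obtain ⟨u, _, hu, ⟨w, rfl⟩, huv⟩ := codisjoint_iff_exists_add_eq.mp hk ⟨x, hx⟩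
  have hrestrict (y : p) : (((f.restrict hp) ^ k) y : M) = (f ^ k) y := by
    rw [pow_restrict, LinearMap.coe_restrict_apply]
  refine ⟨u, u.2, ?_, (f ^ k) w, mem_map_of_mem w.2, ?_⟩
  · rw [← hrestrict, LinearMap.mem_ker.mp hu, ZeroMemClass.coe_zero]
  · rw [← hrestrict, ← coe_add, huv]

end Module.End

section LeftLeibniz

variable {R A : Type*} [CommRing R] [AddCommGroup A] [Module R A]

def IsLeftLeibniz (mul : A →ₗ[R] A →ₗ[R] A) : Prop :=
  ∀ a b c : A, mul a (mul b c) = mul (mul a b) c + mul b (mul a c)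

namespace IsLeftLeibniz

variable {mul : A →ₗ[R] A →ₗ[R] A}

theorem mul_mul_eq_commutator (h : IsLeftLeibniz mul) (a b : A) :
    mul (mul a b) = mul a * mul b - mul b * mul a := by
  ext c
  simp [h a b c]

theorem mul_pow_succ_apply_self (h : IsLeftLeibniz mul) (a : A) (n : ℕ) :
    mul ((mul a ^ (n + 1)) a) = 0 := by
  induction n with
  | zero => rw [zero_add, pow_one, h.mul_mul_eq_commutator, sub_self]
  | succ n ih =>
    rw [pow_succ', Module.End.mul_apply, h.mul_mul_eq_commutator, ih, mul_zero, zero_mul,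
      sub_self]

theorem map_pow_span_range_pow_apply_self_le_ker (h : IsLeftLeibniz mul) (a : A) {k : ℕ}
    (hk : k ≠ 0) :
    (span R (Set.range fun n => (mul a ^ n) a)).map (mul a ^ k) ≤ LinearMap.ker mul := by
  obtain ⟨k, rfl⟩ := Nat.exists_eq_succ_of_ne_zero hk
  rw [Module.End.map_pow_span_range_pow_apply, span_le]
  rintro _ ⟨n, rfl⟩
  exact h.mul_pow_succ_apply_self a (n + k)

end IsLeftLeibniz

end LeftLeibniz

/-- for each `a` there is `a' ∈ E_A(a)` with `L_{a'} = L_a`, so in particular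
`E_A(a') = E_A(a)`. -/
theorem exists_engel_generator_in_engel {F A : Type*} [Field F] [AddCommGroup A] [Module F A]
    [FiniteDimensional F A]
    (mul : A →ₗ[F] A →ₗ[F] A)
    (leibniz : ∀ a b c : A, mul a (mul b c) = mul (mul a b) c + mul b (mul a c))
    (a : A) :
    ∃ a' : A, (∃ n : ℕ, (mul a ^ n) a' = 0) ∧ mul a' = mul a ∧
      {x : A | ∃ n : ℕ, (mul a' ^ n) x = 0} = {x : A | ∃ n : ℕ, (mul a ^ n) x = 0} := by
  have hL : IsLeftLeibniz mul := leibniz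
  obtain ⟨k, hk, hfitting⟩ := ((eventually_ne_atTop 0).and
    (Module.End.eventually_exists_mem_ker_pow_add_mem_map_pow (mul a)
      (Module.End.apply_mem_span_range_pow_apply (mul a) a))).exists
  obtain ⟨u, -, hu, v, hv, rfl⟩ := hfitting a (subset_span ⟨0, by simp⟩)
  have hv_mul : mul v = 0 := hL.map_pow_span_range_pow_apply_self_le_ker _ hk hv
  have hu_mul : mul u = mul (u + v) := by rw [map_add, hv_mul, add_zero]
  exact ⟨u, ⟨k, hu⟩, hu_mul, by rw [hu_mul]⟩
end

section
/- Let A be a finite-dimensional left Leibniz algebra, U a subalgebra of A, and suppose E_A(a) ⊆ U for some a ∈ A. Then the right normaliser {b ∈ A | ub ∈ U for all u ∈ U} equals U. -/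
open Polynomial

/-- In a left Leibniz algebra, `L_{ab} = L_a L_b - L_b L_a`. -/
private lemma mul_mul_eq {F A : Type*} [Field F] [AddCommGroup A] [Module F A]
    (mul : A →ₗ[F] A →ₗ[F] A)
    (leibniz : ∀ a b c : A, mul a (mul b c) = mul (mul a b) c + mul b (mul a c))
    (a x : A) : mul (mul a x) = mul a ∘ₗ mul x - mul x ∘ₗ mul a := by
  ext c
  have := leibniz a x c
  simp only [LinearMap.sub_apply, LinearMap.comp_apply]
  rw [this]; abel

/-- `L_{L_a^{n+1} a} = 0`. -/
private lemma mul_pow_self {F A : Type*} [Field F] [AddCommGroup A] [Module F A]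
    (mul : A →ₗ[F] A →ₗ[F] A)
    (leibniz : ∀ a b c : A, mul a (mul b c) = mul (mul a b) c + mul b (mul a c))
    (a : A) : ∀ n : ℕ, mul ((mul a ^ (n + 1)) a) = 0 := by
  intro n
  induction n with
  | zero =>
    rw [pow_one, mul_mul_eq mul leibniz a a, sub_self]
  | succ n ih =>
    have h : (mul a ^ (n + 2)) a = mul a ((mul a ^ (n + 1)) a) := by
      rw [pow_succ' (mul a) (n + 1)]; rfl
    rw [h, mul_mul_eq mul leibniz a _, ih]
    simp

/-- Polynomials in `L_a` applied to `L_a a` have zero left multiplication. -/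
private lemma mul_aeval_zero {F A : Type*} [Field F] [AddCommGroup A] [Module F A]
    (mul : A →ₗ[F] A →ₗ[F] A)
    (leibniz : ∀ a b c : A, mul a (mul b c) = mul (mul a b) c + mul b (mul a c))
    (a : A) (p : F[X]) : (aeval (mul a) p) (mul a a) ∈ LinearMap.ker mul := by
  induction p using Polynomial.induction_on' with
  | add p q hp hq =>
    rw [map_add, LinearMap.add_apply]
    exact add_mem hp hq
  | monomial n c =>
    rw [aeval_monomial]
    have : ((algebraMap F (Module.End F A)) c * mul a ^ n) (mul a a)
        = c • ((mul a ^ (n + 1)) a) := by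
      simp only [Module.End.mul_apply, Module.algebraMap_end_apply, pow_succ]
    rw [this, LinearMap.mem_ker, map_smul, mul_pow_self mul leibniz a n, smul_zero]

/-- a subalgebra containing an Engel subalgebra is its own right normaliser. -/
theorem rightNormaliser_eq_self_of_engel_le {F A : Type*} [Field F] [AddCommGroup A]
    [Module F A] [FiniteDimensional F A]
    (mul : A →ₗ[F] A →ₗ[F] A)
    (leibniz : ∀ a b c : A, mul a (mul b c) = mul (mul a b) c + mul b (mul a c))
    (U : Submodule F A) (hU : ∀ u ∈ U, ∀ v ∈ U, mul u v ∈ U)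
    (a : A) (hE : ∀ x : A, (∃ n : ℕ, (mul a ^ n) x = 0) → x ∈ U) :
    {b : A | ∀ u ∈ U, mul u b ∈ U} = (U : Set A) := by
  set T : Module.End F A := mul a with hT
  -- Step 1: find a' ∈ U with mul a' = mul a
  have hμ0 : minpoly F T ≠ 0 := minpoly.ne_zero (LinearMap.isIntegral T)
  obtain ⟨q, hq, hqnd⟩ := (minpoly F T).exists_eq_pow_rootMultiplicity_mul_and_not_dvd hμ0 0
  rw [map_zero, sub_zero] at hq hqnd
  set r := (minpoly F T).rootMultiplicity 0
  have hcop : IsCoprime (X ^ (r + 1) : F[X]) q :=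
    ((Polynomial.prime_X.coprime_iff_not_dvd).mpr hqnd).pow_left
  obtain ⟨u, v, huv⟩ := hcop
  set f : A := (aeval T (u * X ^ (r + 1))) a with hf
  set a' : A := (aeval T (v * q)) a with ha'
  have hsplit : f + a' = a := by
    rw [hf, ha', ← LinearMap.add_apply, ← map_add, huv, map_one, Module.End.one_apply]
  -- mul f = 0
  have hmulf : mul f = 0 := by
    have h1 : f = (aeval T (u * X ^ r)) (mul a a) := by
      rw [hf]
      have : (u * X ^ (r + 1)) = (u * X ^ r) * X := by ring
      rw [this, map_mul, aeval_X, Module.End.mul_apply]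
    rw [h1]
    exact LinearMap.mem_ker.mp (mul_aeval_zero mul leibniz a (u * X ^ r))
  -- a' killed by a power of T
  have hkill : (T ^ (r + 1)) a' = 0 := by
    have key : (aeval T ((v * X) * (X ^ r * q))) a = 0 := by
      rw [map_mul, ← hq, Module.End.mul_apply, minpoly.aeval]
      simp
    have e : (X ^ (r + 1) : F[X]) * (v * q) = (v * X) * (X ^ r * q) := by ring
    calc (T ^ (r + 1)) a' = (aeval T (X ^ (r + 1) * (v * q))) a := by
          simp only [ha', map_mul, aeval_X_pow, Module.End.mul_apply]
      _ = 0 := by rw [e]; exact key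
  -- mul a' = T
  have hmula' : mul a' = T := by
    have := hsplit
    have h2 : mul (f + a') = mul a := by rw [this]
    rw [map_add, hmulf, zero_add] at h2
    exact h2
  have ha'U : a' ∈ U := hE a' ⟨r + 1, hkill⟩
  -- U is T-stable
  have hTU : ∀ x ∈ U, T x ∈ U := fun x hx => hmula' ▸ hU a' ha'U x hx
  -- Step 2: A = U + range T
  obtain ⟨N0, hN0⟩ := Filter.eventually_atTop.mp T.eventually_codisjoint_ker_pow_range_pow
  set N := N0 + 1 with hNdef
  have hN : Codisjoint (LinearMap.ker (T ^ N)) (LinearMap.range (T ^ N)) :=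
    hN0 N (Nat.le_succ N0)
  have hsup : (⊤ : Submodule F A) ≤ U ⊔ LinearMap.range T := by
    have h1 : LinearMap.ker (T ^ N) ≤ U := fun x hx => hE x ⟨N, hx⟩
    have h2 : LinearMap.range (T ^ N) ≤ LinearMap.range T := by
      rintro x ⟨y, rfl⟩
      exact ⟨(T ^ N0) y, by rw [← Module.End.mul_apply, ← pow_succ']⟩
    calc (⊤ : Submodule F A) = LinearMap.ker (T ^ N) ⊔ LinearMap.range (T ^ N) :=
          (codisjoint_iff.mp hN).symm
      _ ≤ U ⊔ LinearMap.range T := sup_le (le_trans h1 le_sup_left) (le_trans h2 le_sup_right)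
  -- Step 3: induced map on A ⧸ U
  have hle : U ≤ U.comap T := fun x hx => hTU x hx
  set Tbar := U.mapQ U T hle with hTbar
  have happ : ∀ z : A, Tbar (U.mkQ z) = U.mkQ (T z) := fun z => by
    simp [hTbar, Submodule.mapQ_apply, Submodule.mkQ_apply]
  have hsurj : Function.Surjective Tbar := by
    intro x
    obtain ⟨y, rfl⟩ := U.mkQ_surjective x
    have hy : y ∈ U ⊔ LinearMap.range T := hsup trivial
    obtain ⟨p, hp, w, ⟨z, rfl⟩, rfl⟩ := Submodule.mem_sup.mp hy
    refine ⟨U.mkQ z, ?_⟩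
    rw [happ z, map_add, show U.mkQ p = 0 by
      simpa using (Submodule.Quotient.mk_eq_zero U).mpr hp, zero_add]
  have hinj : Function.Injective Tbar :=
    (LinearMap.injective_iff_surjective).mpr hsurj
  -- Step 4: conclude
  ext b
  simp only [Set.mem_setOf_eq, SetLike.mem_coe]
  constructor
  · intro hb
    have h1 : T b ∈ U := by rw [← hmula']; exact hb a' ha'U
    have h2 : Tbar (U.mkQ b) = 0 := by
      rw [happ b]
      simpa using (Submodule.Quotient.mk_eq_zero U).mpr h1
    have h3 : U.mkQ b = 0 := by apply hinj; rw [h2, map_zero]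
    have := (Submodule.Quotient.mk_eq_zero U).mp (by simpa using h3)
    exact this
  · intro hb u hu
    exact hU u hu b hb
end
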